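/- arXiv:1304.5777 — 3 statements merged into one kernel-verified Lean document; each statement's English description precedes it below -/
import Mathlib

section
/- Let v, n be positive integers and let E₁ be a finite set of s₁ monomials. Define E₂ = E₁⁺ (finite sums of elements of E₁), E₃ = E₂^{×v} (products of at most v elements of E₂), and E₄ = E₃⁺. If the n×n permanent Perm_n lies in E₄, then s₁ ≥ (n!)^{1/v} − 1. -/
open MvPolynomial

/-- The permanent polynomial `Perm_n = Σ_{σ ∈ S_n} Π_i x_{i, σ i}` in `n²` variables. -/
noncomputable def permPoly (n : ℕ) : MvPolynomial (Fin n × Fin n) ℚ :=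
  ∑ σ : Equiv.Perm (Fin n), ∏ i : Fin n, X (i, σ i)

open Pointwise Finset in
private lemma aux_support_list_sum {n : ℕ} {S : Finset ((Fin n × Fin n) →₀ ℕ)}
    (g : List (MvPolynomial (Fin n × Fin n) ℚ))
    (h : ∀ p ∈ g, p.support ⊆ S) : g.sum.support ⊆ S := by
  classical
  induction g with
  | nil => simp
  | cons a l ih =>
    rw [List.sum_cons]
    refine MvPolynomial.support_add.trans ?_
    exact Finset.union_subset (h a (by simp)) (ih fun p hp => h p (by simp [hp]))

open Pointwise Finset in
private lemma aux_support_list_prod {n : ℕ} {M' : Finset ((Fin n × Fin n) →₀ ℕ)}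
    (g : List (MvPolynomial (Fin n × Fin n) ℚ))
    (h : ∀ p ∈ g, p.support ⊆ M') : g.prod.support ⊆ g.length • M' := by
  classical
  induction g with
  | nil =>
    simp only [List.prod_nil, List.length_nil, zero_nsmul]
    intro m hm
    rw [MvPolynomial.mem_support_iff] at hm
    have : m = 0 := by
      by_contra hc
      rw [MvPolynomial.coeff_one, if_neg (fun h => hc h.symm)] at hm
      exact hm rfl
    simp [this, Finset.mem_zero]
  | cons a l ih =>
    rw [List.prod_cons, List.length_cons]
    refine (MvPolynomial.support_mul _ _).trans ?_
    rw [succ_nsmul']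
    exact Finset.add_subset_add (h a (by simp)) (ih fun p hp => h p (by simp [hp]))

/-- exponent of σ -/
private noncomputable def mexp (n : ℕ) (σ : Equiv.Perm (Fin n)) : (Fin n × Fin n) →₀ ℕ :=
  ∑ i : Fin n, Finsupp.single (i, σ i) 1

private lemma mexp_apply {n : ℕ} (σ : Equiv.Perm (Fin n)) (i j : Fin n) :
    mexp n σ (i, j) = if σ i = j then 1 else 0 := by
  classical
  rw [mexp, Finsupp.finset_sum_apply]
  rw [Finset.sum_eq_single i]
  · simp [Finsupp.single_apply, Prod.ext_iff]
  · intro b _ hb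
    simp [Finsupp.single_apply, Prod.ext_iff, hb]
  · simp

private lemma mexp_inj {n : ℕ} : Function.Injective (mexp n) := by
  intro σ τ h
  ext i
  have h1 := mexp_apply σ i (σ i)
  have h2 := mexp_apply τ i (σ i)
  rw [h, h2] at h1
  simp at h1
  exact congrArg Fin.val h1.symm

private lemma perm_eq {n : ℕ} :
    permPoly n = ∑ σ : Equiv.Perm (Fin n), monomial (mexp n σ) (1 : ℚ) := by
  unfold permPoly mexp
  refine Finset.sum_congr rfl fun σ _ => ?_
  rw [monomial_sum_one]
  refine Finset.prod_congr rfl fun i _ => ?_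
  rw [X]

private lemma perm_coeff {n : ℕ} (σ : Equiv.Perm (Fin n)) :
    coeff (mexp n σ) (permPoly n) = 1 := by
  classical
  rw [perm_eq, coeff_sum]
  rw [Finset.sum_eq_single σ]
  · simp [coeff_monomial]
  · intro τ _ hτ
    rw [coeff_monomial, if_neg (fun h => hτ (mexp_inj h))]
  · simp

private lemma perm_support_card {n : ℕ} : n.factorial ≤ (permPoly n).support.card := by
  classical
  have hsub : (Finset.univ.image (mexp n)) ⊆ (permPoly n).support := by
    intro m hm
    simp only [Finset.mem_image] at hm
    obtain ⟨σ, _, rfl⟩ := hm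
    rw [mem_support_iff, perm_coeff]; norm_num
  calc n.factorial = (Finset.univ.image (mexp n)).card := by
        rw [Finset.card_image_of_injective _ mexp_inj, Finset.card_univ, Fintype.card_perm,
          Fintype.card_fin]
    _ ≤ _ := Finset.card_le_card hsub

/-- If `E₁` is a finite set of `s₁` monomials, `E₂ = E₁⁺`, `E₃ = E₂^{×v}`, `E₄ = E₃⁺`,
and `Perm_n ∈ E₄`, then `s₁ ≥ (n!)^{1/v} − 1`. -/
theorem bottom_gates_lower_bound (n v : ℕ) (hn : 0 < n) (hv : 0 < v)
    (E₁ : Finset (MvPolynomial (Fin n × Fin n) ℚ))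
    (hmono : ∀ f ∈ E₁, ∃ (m : (Fin n × Fin n) →₀ ℕ) (c : ℚ), f = monomial m c)
    (E₂ E₃ E₄ : Set (MvPolynomial (Fin n × Fin n) ℚ))
    (hE₂ : E₂ = {h | ∃ g : List (MvPolynomial (Fin n × Fin n) ℚ),
      (∀ p ∈ g, p ∈ E₁) ∧ h = g.sum})
    (hE₃ : E₃ = {h | ∃ g : List (MvPolynomial (Fin n × Fin n) ℚ),
      g.length ≤ v ∧ (∀ p ∈ g, p ∈ E₂) ∧ h = g.prod})
    (hE₄ : E₄ = {h | ∃ g : List (MvPolynomial (Fin n × Fin n) ℚ),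
      (∀ p ∈ g, p ∈ E₃) ∧ h = g.sum})
    (hperm : permPoly n ∈ E₄) :
    (n.factorial : ℝ) ^ ((1 : ℝ) / v) - 1 ≤ E₁.card := by
  classical
  open Pointwise in
  -- the set of exponents of monomials in E₁, together with 0
  set M' : Finset ((Fin n × Fin n) →₀ ℕ) := insert 0 (E₁.biUnion fun f => f.support) with hM'
  have h0 : (0 : (Fin n × Fin n) →₀ ℕ) ∈ M' := Finset.mem_insert_self _ _
  have hM'card : M'.card ≤ E₁.card + 1 := by
    refine (Finset.card_insert_le _ _).trans ?_
    have : (E₁.biUnion fun f => f.support).card ≤ E₁.card := by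
      refine (Finset.card_biUnion_le).trans ?_
      refine (Finset.sum_le_card_nsmul _ _ 1 ?_).trans (by simp)
      intro f hf
      obtain ⟨m, c, rfl⟩ := hmono f hf
      exact (Finset.card_le_card MvPolynomial.support_monomial_subset).trans (by simp)
    omega
  -- supports of elements of E₂
  have hE₂supp : ∀ h ∈ E₂, MvPolynomial.support h ⊆ M' := by
    intro h hh
    rw [hE₂] at hh
    obtain ⟨g, hg, rfl⟩ := hh
    refine aux_support_list_sum g fun p hp => ?_
    intro m hm
    exact Finset.mem_insert_of_mem (Finset.mem_biUnion.2 ⟨p, hg p hp, hm⟩)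
  -- supports of elements of E₃
  have hE₃supp : ∀ h ∈ E₃, MvPolynomial.support h ⊆ v • M' := by
    intro h hh
    rw [hE₃] at hh
    obtain ⟨g, hlen, hg, rfl⟩ := hh
    refine (aux_support_list_prod g fun p hp => hE₂supp p (hg p hp)).trans ?_
    exact Finset.nsmul_subset_nsmul_right h0 hlen
  -- supports of elements of E₄
  have hE₄supp : ∀ h ∈ E₄, MvPolynomial.support h ⊆ v • M' := by
    intro h hh
    rw [hE₄] at hh
    obtain ⟨g, hg, rfl⟩ := hh
    exact aux_support_list_sum g fun p hp => hE₃supp p (hg p hp)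
  -- main counting inequality
  have hcount : (n.factorial : ℕ) ≤ (E₁.card + 1) ^ v := by
    calc n.factorial ≤ (permPoly n).support.card := perm_support_card
      _ ≤ (v • M').card := Finset.card_le_card (hE₄supp _ hperm)
      _ ≤ M'.card ^ v := Finset.card_nsmul_le
      _ ≤ (E₁.card + 1) ^ v := Nat.pow_le_pow_left hM'card v
  -- convert to reals
  have hreal : (n.factorial : ℝ) ^ ((1 : ℝ) / v) ≤ (E₁.card : ℝ) + 1 := by
    have h1 : (n.factorial : ℝ) ≤ ((E₁.card : ℝ) + 1) ^ (v : ℕ) := by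
      exact_mod_cast hcount
    have h2 : ((n.factorial : ℝ)) ^ ((1 : ℝ) / v) ≤
        (((E₁.card : ℝ) + 1) ^ (v : ℕ)) ^ ((1 : ℝ) / v) := by
      apply Real.rpow_le_rpow (by positivity) h1 (by positivity)
    refine h2.trans_eq ?_
    rw [← Real.rpow_natCast ((E₁.card : ℝ) + 1) v, ← Real.rpow_mul (by positivity)]
    rw [mul_one_div, div_self (by exact_mod_cast hv.ne'), Real.rpow_one]
  linarith
end

section
/- Any ΣΠΣΠ arithmetic circuit computing the n×n permanent in which every multiplication gate at level 3 has fan-in at most v has size at least (n!)^{1/v} − 1, which is 2^{Ω((n/v)·log n)}. -/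
open MvPolynomial

/-- A ΣΠΣΠ circuit over the `n²` variables of the permanent, with the fan-in of the
multiplication gates at level 3 bounded by `v`.  Gates at each level are listed,
together with the requirement that each gate is built from gates of the previous level:
level-1 gates are monomials (products of inputs), level-2 and level-4 gates are sums,
and level-3 gates are products of at most `v` level-2 gates. -/
structure SPSPCircuit (n v : ℕ) where
  L1 : List (MvPolynomial (Fin n × Fin n) ℚ)
  L2 : List (MvPolynomial (Fin n × Fin n) ℚ)
  L3 : List (MvPolynomial (Fin n × Fin n) ℚ)
  L4 : List (MvPolynomial (Fin n × Fin n) ℚ)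
  hL1 : ∀ f ∈ L1, ∃ (m : (Fin n × Fin n) →₀ ℕ) (c : ℚ), f = monomial m c
  hL2 : ∀ f ∈ L2, ∃ g : List (MvPolynomial (Fin n × Fin n) ℚ),
    (∀ p ∈ g, p ∈ L1) ∧ f = g.sum
  hL3 : ∀ f ∈ L3, ∃ g : List (MvPolynomial (Fin n × Fin n) ℚ),
    g.length ≤ v ∧ (∀ p ∈ g, p ∈ L2) ∧ f = g.prod
  hL4 : ∀ f ∈ L4, ∃ g : List (MvPolynomial (Fin n × Fin n) ℚ),
    (∀ p ∈ g, p ∈ L3) ∧ f = g.sum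

/-- The size (number of gates) of a ΣΠΣΠ circuit. -/
def SPSPCircuit.size {n v : ℕ} (C : SPSPCircuit n v) : ℕ :=
  C.L1.length + C.L2.length + C.L3.length + C.L4.length

namespace SPSPAux

open Finset Pointwise

variable {n : ℕ}

abbrev Mon (n : ℕ) := (Fin n × Fin n) →₀ ℕ

abbrev Pol (n : ℕ) := MvPolynomial (Fin n × Fin n) ℚ

/-- Exponent vector of the monomial of a permutation. -/
noncomputable def pmon (σ : Equiv.Perm (Fin n)) : Mon n :=
  ∑ i : Fin n, Finsupp.single (i, σ i) 1

lemma pmon_apply (σ : Equiv.Perm (Fin n)) (i b : Fin n) :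
    pmon σ (i, b) = if σ i = b then 1 else 0 := by
  classical
  rw [pmon, Finsupp.finset_sum_apply]
  rw [Finset.sum_eq_single i]
  · simp [Finsupp.single_apply, Prod.ext_iff]
  · intro j _ hj
    simp [Finsupp.single_apply, Prod.ext_iff, hj]
  · simp

lemma pmon_injective : Function.Injective (pmon (n := n)) := by
  intro σ τ h
  apply Equiv.ext
  intro i
  have h2 := pmon_apply τ i (σ i)
  rw [← h, pmon_apply, if_pos rfl] at h2
  by_cases hc : τ i = σ i
  · exact hc.symm
  · rw [if_neg hc] at h2
    exact absurd h2 one_ne_zero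

lemma permPoly_eq (n : ℕ) :
    permPoly n = ∑ σ : Equiv.Perm (Fin n), monomial (pmon σ) (1 : ℚ) := by
  unfold permPoly
  refine Finset.sum_congr rfl fun σ _ => ?_
  rw [pmon, monomial_sum_one]
  refine Finset.prod_congr rfl fun i _ => ?_
  rw [X]

lemma coeff_permPoly (σ : Equiv.Perm (Fin n)) :
    MvPolynomial.coeff (pmon σ) (permPoly n) = 1 := by
  classical
  rw [permPoly_eq, MvPolynomial.coeff_sum]
  rw [Finset.sum_eq_single σ]
  · simp [MvPolynomial.coeff_monomial]
  · intro τ _ hτ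
    rw [MvPolynomial.coeff_monomial, if_neg]
    intro h
    exact hτ (pmon_injective h)
  · simp

lemma factorial_le_card_support (n : ℕ) :
    n.factorial ≤ (permPoly n).support.card := by
  classical
  have himg : (Finset.univ.image (pmon (n := n))) ⊆ (permPoly n).support := by
    intro m hm
    rcases Finset.mem_image.mp hm with ⟨σ, _, rfl⟩
    rw [MvPolynomial.mem_support_iff, coeff_permPoly]
    exact one_ne_zero
  calc n.factorial = Fintype.card (Equiv.Perm (Fin n)) := by
        rw [Fintype.card_perm, Fintype.card_fin]
    _ = (Finset.univ.image (pmon (n := n))).card := by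
        rw [Finset.card_image_of_injective _ pmon_injective, Finset.card_univ]
    _ ≤ (permPoly n).support.card := Finset.card_le_card himg

/-- iterated sumset -/
noncomputable def iterSum (S0 : Finset (Mon n)) : ℕ → Finset (Mon n)
  | 0 => {0}
  | (k + 1) => S0 + iterSum S0 k

lemma card_iterSum (S0 : Finset (Mon n)) (k : ℕ) :
    (iterSum S0 k).card ≤ S0.card ^ k := by
  induction k with
  | zero => simp [iterSum]
  | succ k ih =>
    calc (iterSum S0 (k + 1)).card ≤ S0.card * (iterSum S0 k).card :=
          Finset.card_add_le
      _ ≤ S0.card * S0.card ^ k := Nat.mul_le_mul_left _ ih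
      _ = S0.card ^ (k + 1) := by ring

lemma iterSum_mono (S0 : Finset (Mon n)) (h0 : (0 : Mon n) ∈ S0) {k l : ℕ} (hkl : k ≤ l) :
    iterSum S0 k ⊆ iterSum S0 l := by
  induction l with
  | zero => simp [Nat.le_zero.mp hkl]
  | succ l ih =>
    rcases Nat.lt_or_ge k (l + 1) with h | h
    · intro x hx
      have hx' : x ∈ iterSum S0 l := ih (Nat.lt_succ_iff.mp h) hx
      have : (0 : Mon n) + x ∈ S0 + iterSum S0 l := Finset.add_mem_add h0 hx'
      simpa [iterSum] using this
    · have : k = l + 1 := le_antisymm hkl h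
      subst this; exact subset_rfl

lemma listSum_support_subset (S : Finset (Mon n)) (g : List (Pol n))
    (h : ∀ p ∈ g, p.support ⊆ S) : g.sum.support ⊆ S := by
  classical
  induction g with
  | nil => simp
  | cons a t ih =>
    rw [List.sum_cons]
    refine MvPolynomial.support_add.trans ?_
    refine Finset.union_subset (h a (by simp)) (ih fun p hp => h p (by simp [hp]))

lemma listProd_support_subset (S0 : Finset (Mon n)) (g : List (Pol n))
    (h : ∀ p ∈ g, p.support ⊆ S0) : g.prod.support ⊆ iterSum S0 g.length := by
  classical
  induction g with
  | nil =>
    simp only [List.prod_nil, List.length_nil]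
    refine (MvPolynomial.support_monomial_subset (s := 0) (a := (1:ℚ))).trans ?_
    simp [iterSum]
  | cons a t ih =>
    rw [List.prod_cons, List.length_cons]
    refine (MvPolynomial.support_mul _ _).trans ?_
    show a.support + t.prod.support ⊆ S0 + iterSum S0 t.length
    exact Finset.add_subset_add (h a (by simp)) (ih fun p hp => h p (by simp [hp]))

end SPSPAux

open SPSPAux Finset in
/-- Any ΣΠΣΠ circuit computing the `n × n` permanent whose level-3 multiplication gates have
fan-in at most `v` has size at least `(n!)^{1/v} − 1`. -/
theorem spsp_size_lower_bound (n v : ℕ) (hn : 0 < n) (hv : 0 < v)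
    (C : SPSPCircuit n v) (hperm : permPoly n ∈ C.L4) :
    (n.factorial : ℝ) ^ ((1 : ℝ) / v) - 1 ≤ C.size := by
  classical
  -- the set of monomials of level-1 gates
  set S : Finset (Mon n) := C.L1.foldr (fun f s => f.support ∪ s) ∅ with hS
  have hScard : S.card ≤ C.L1.length := by
    rw [hS]
    have : ∀ (L : List (Pol n)), (∀ f ∈ L, ∃ m c, f = monomial m c) →
        (L.foldr (fun (f : Pol n) s => f.support ∪ s) ∅).card ≤ L.length := by
      intro L
      induction L with
      | nil => simp
      | cons a t ih =>
        intro hmem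
        simp only [List.foldr_cons, List.length_cons]
        refine (Finset.card_union_le _ _).trans ?_
        have ha : a.support.card ≤ 1 := by
          obtain ⟨m, c, rfl⟩ := hmem a (by simp)
          refine (Finset.card_le_card (MvPolynomial.support_monomial_subset)).trans ?_
          simp
        have := ih fun f hf => hmem f (by simp [hf])
        omega
    exact this C.L1 C.hL1
  have hSmem' : ∀ (L : List (Pol n)), ∀ p ∈ L,
      p.support ⊆ L.foldr (fun (f : Pol n) s => f.support ∪ s) ∅ := by
    intro L
    induction L with
    | nil => intro p hp; simp at hp
    | cons a t ih =>
      intro p hp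
      simp only [List.foldr_cons]
      rcases List.mem_cons.mp hp with rfl | hp'
      · exact Finset.subset_union_left
      · exact (ih p hp').trans Finset.subset_union_right
  have hSmem : ∀ p ∈ C.L1, p.support ⊆ S := fun p hp => hSmem' C.L1 p hp
  set S0 : Finset (Mon n) := insert 0 S with hS0
  have h0 : (0 : Mon n) ∈ S0 := Finset.mem_insert_self _ _
  -- level-2 gates have support in S0
  have hL2 : ∀ p ∈ C.L2, p.support ⊆ S0 := by
    intro p hp
    obtain ⟨g, hg, rfl⟩ := C.hL2 p hp
    refine (listSum_support_subset S g fun q hq => hSmem q (hg q hq)).trans ?_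
    exact Finset.subset_insert _ _
  -- level-3 gates have support in iterSum S0 v
  have hL3 : ∀ p ∈ C.L3, p.support ⊆ iterSum S0 v := by
    intro p hp
    obtain ⟨g, hlen, hg, rfl⟩ := C.hL3 p hp
    exact (listProd_support_subset S0 g fun q hq => hL2 q (hg q hq)).trans
      (iterSum_mono S0 h0 hlen)
  -- level-4 gates too
  have hL4 : (permPoly n).support ⊆ iterSum S0 v := by
    obtain ⟨g, hg, hsum⟩ := C.hL4 _ hperm
    rw [hsum]
    exact listSum_support_subset _ g fun q hq => hL3 q (hg q hq)
  -- counting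
  have hcount : n.factorial ≤ (C.size + 1) ^ v := by
    calc n.factorial ≤ (permPoly n).support.card := factorial_le_card_support n
      _ ≤ (iterSum S0 v).card := Finset.card_le_card hL4
      _ ≤ S0.card ^ v := card_iterSum S0 v
      _ ≤ (C.size + 1) ^ v := by
          refine Nat.pow_le_pow_left ?_ v
          have : S0.card ≤ S.card + 1 := Finset.card_insert_le _ _
          have hsz : C.L1.length ≤ C.size := by
            unfold SPSPCircuit.size; omega
          omega
  -- real arithmetic
  have hcast : (n.factorial : ℝ) ≤ ((C.size + 1 : ℕ) : ℝ) ^ (v : ℕ) := by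
    exact_mod_cast hcount
  have hv' : (0 : ℝ) < v := by exact_mod_cast hv
  have key : (n.factorial : ℝ) ^ ((1 : ℝ) / v) ≤ ((C.size + 1 : ℕ) : ℝ) := by
    have h1 : (n.factorial : ℝ) ^ ((1 : ℝ) / v) ≤
        (((C.size + 1 : ℕ) : ℝ) ^ (v : ℕ)) ^ ((1 : ℝ) / v) := by
      apply Real.rpow_le_rpow (by positivity) hcast (by positivity)
    calc (n.factorial : ℝ) ^ ((1 : ℝ) / v) ≤
        (((C.size + 1 : ℕ) : ℝ) ^ (v : ℕ)) ^ ((1 : ℝ) / v) := h1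
      _ = ((C.size + 1 : ℕ) : ℝ) ^ ((v : ℝ) * (1 / v)) := by
          rw [← Real.rpow_natCast ((C.size + 1 : ℕ) : ℝ) v,
            ← Real.rpow_mul (by positivity)]
      _ = ((C.size + 1 : ℕ) : ℝ) := by
          rw [mul_one_div, div_self (ne_of_gt hv'), Real.rpow_one]
  have : ((C.size + 1 : ℕ) : ℝ) = (C.size : ℝ) + 1 := by push_cast; ring
  linarith [key, this.le]
end

section
/- If t, n are positive integers with t ≤ n, and C is a homogeneous ΣΠΣΠ circuit computing Perm_n such that every bottom multiplication gate has fan-in (hence degree) at least t, then every level-3 multiplication gate of C has fan-in at most n/t, and consequently the size of C is at least (n!)^{t/n} − 1 = 2^{Ω(t log n)}. -/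
open MvPolynomial

/-- A homogeneous ΣΠΣΠ circuit over the `n²` permanent variables in which every bottom
multiplication gate has fan-in (hence degree) at least `t`.  Level-1 gates are nonzero
monomials of degree at least `t`; level-2 gates are homogeneous sums of level-1 gates, of
degree at least `t`; level-3 gates are products of level-2 gates (each recorded with its
list of inputs, whose length is its fan-in), nonzero and homogeneous of degree at most `n`
since the homogeneous circuit computes the degree-`n` permanent; level-4 gates are sums of
level-3 gates. -/
structure HomSPSPCircuit (n t : ℕ) where
  L1 : List (MvPolynomial (Fin n × Fin n) ℚ)
  L2 : List (MvPolynomial (Fin n × Fin n) ℚ)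
  L3 : List (List (MvPolynomial (Fin n × Fin n) ℚ))
  L4 : List (MvPolynomial (Fin n × Fin n) ℚ)
  hL1 : ∀ f ∈ L1, ∃ (m : (Fin n × Fin n) →₀ ℕ) (c : ℚ),
    f = monomial m c ∧ c ≠ 0 ∧ t ≤ m.sum fun _ e => e
  hL2 : ∀ f ∈ L2, (∃ g : List (MvPolynomial (Fin n × Fin n) ℚ),
    (∀ p ∈ g, p ∈ L1) ∧ f = g.sum) ∧ ∃ m : ℕ, t ≤ m ∧ f ≠ 0 ∧ f.IsHomogeneous m
  hL3 : ∀ g ∈ L3, (∀ p ∈ g, p ∈ L2) ∧ g.prod ≠ 0 ∧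
    ∃ m : ℕ, m ≤ n ∧ (g.prod).IsHomogeneous m
  hL4 : ∀ f ∈ L4, ∃ g : List (List (MvPolynomial (Fin n × Fin n) ℚ)),
    (∀ p ∈ g, p ∈ L3) ∧ f = (g.map List.prod).sum

/-- The size (number of gates) of a homogeneous ΣΠΣΠ circuit. -/
def HomSPSPCircuit.size {n t : ℕ} (C : HomSPSPCircuit n t) : ℕ :=
  C.L1.length + C.L2.length + C.L3.length + C.L4.length

/-!
A level-3 gate multiplies homogeneous polynomials of degree at least `t` into a nonzero
polynomial of degree at most `n`, so it has at most `K = n / t` factors. Every monomial of a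
level-2 gate is one of the at most `|L1|` monomials of the bottom gates, hence every monomial of
the output is a sum of at most `K` of them, and the output has at most `(size + 1)^K` monomials.
The permanent has `n!` distinct monomials, so `n! ≤ (size + 1)^K`, and `K t ≤ n` turns this into
`(n!)^{t/n} ≤ size + 1`.
-/

open Finset
open scoped Pointwise

namespace MvPolynomial

variable {σ R : Type*} [CommSemiring R]

theorem exists_isHomogeneous_list_prod {l : List (MvPolynomial σ R)} {t : ℕ}
    (h : ∀ p ∈ l, ∃ m, t ≤ m ∧ p.IsHomogeneous m) :
    ∃ d, t * l.length ≤ d ∧ l.prod.IsHomogeneous d := by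
  induction l with
  | nil => exact ⟨0, by simp, isHomogeneous_one σ R⟩
  | cons p l ih =>
    obtain ⟨m, htm, hp⟩ := h p List.mem_cons_self
    obtain ⟨d, htd, hl⟩ := ih fun q hq => h q (List.mem_cons_of_mem p hq)
    refine ⟨m + d, ?_, hp.mul hl⟩
    rw [List.length_cons, Nat.mul_succ]
    omega

theorem mul_length_le_of_isHomogeneous_list_prod {l : List (MvPolynomial σ R)} {t d : ℕ}
    (h : ∀ p ∈ l, ∃ m, t ≤ m ∧ p.IsHomogeneous m) (hne : l.prod ≠ 0)
    (hd : l.prod.IsHomogeneous d) : t * l.length ≤ d := by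
  obtain ⟨d', htd', hd'⟩ := exists_isHomogeneous_list_prod h
  exact hd'.inj_right hd hne ▸ htd'

theorem support_list_sum_subset [DecidableEq σ] {l : List (MvPolynomial σ R)}
    {s : Finset (σ →₀ ℕ)} (h : ∀ p ∈ l, p.support ⊆ s) : l.sum.support ⊆ s :=
  List.sum_induction (fun p : MvPolynomial σ R => p.support ⊆ s)
    (fun _ _ hp hq => support_add.trans (union_subset hp hq)) (by simp) h

theorem support_list_prod_subset_nsmul [DecidableEq σ] {l : List (MvPolynomial σ R)}
    {s : Finset (σ →₀ ℕ)} (h : ∀ p ∈ l, p.support ⊆ s) : l.prod.support ⊆ l.length • s := by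
  induction l with
  | nil =>
    rw [List.prod_nil, List.length_nil, zero_nsmul, ← singleton_zero, one_def]
    exact support_monomial_subset
  | cons p l ih =>
    rw [List.prod_cons, List.length_cons, succ_nsmul']
    exact (support_mul p l.prod).trans <| add_subset_add (h p List.mem_cons_self)
      (ih fun q hq => h q (List.mem_cons_of_mem p hq))

end MvPolynomial

open MvPolynomial

noncomputable def permExponent {n : ℕ} (σ : Equiv.Perm (Fin n)) : Fin n × Fin n →₀ ℕ :=
  ∑ i, Finsupp.single (i, σ i) 1

theorem permExponent_apply {n : ℕ} (σ : Equiv.Perm (Fin n)) (i j : Fin n) :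
    permExponent σ (i, j) = if σ i = j then 1 else 0 := by
  rw [permExponent, Finsupp.finsetSum_apply, sum_eq_single i]
  · simp [Finsupp.single_apply]
  · intro k _ hk
    simp [hk]
  · simp

theorem permExponent_injective (n : ℕ) : Function.Injective (permExponent (n := n)) := by
  intro σ τ h
  refine Equiv.ext fun i => ?_
  have := permExponent_apply τ i (σ i)
  rw [← h, permExponent_apply, if_pos rfl] at this
  simpa [eq_comm] using this

theorem permPoly_eq_sum_monomial (n : ℕ) :
    permPoly n = ∑ σ : Equiv.Perm (Fin n), monomial (permExponent σ) 1 := by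
  simp only [permPoly, permExponent, monomial_sum_one]
  rfl

theorem coeff_permExponent_permPoly {n : ℕ} (σ : Equiv.Perm (Fin n)) :
    coeff (permExponent σ) (permPoly n) = 1 := by
  simp [permPoly_eq_sum_monomial, coeff_sum, coeff_monomial, (permExponent_injective n).eq_iff]

theorem factorial_le_card_support_permPoly (n : ℕ) : n.factorial ≤ #(permPoly n).support := by
  classical
  calc n.factorial = #(univ.image (permExponent (n := n))) := by
        rw [card_image_of_injective _ (permExponent_injective n), card_univ, Fintype.card_perm,
          Fintype.card_fin]
    _ ≤ #(permPoly n).support := card_le_card fun m hm => by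
        obtain ⟨σ, -, rfl⟩ := mem_image.mp hm
        simp [mem_support_iff, coeff_permExponent_permPoly]

theorem rpow_div_le_of_le_pow {x y : ℝ} {K t n : ℕ} (hx : 0 ≤ x) (hy : 1 ≤ y)
    (hxy : x ≤ y ^ K) (hKt : K * t ≤ n) : x ^ ((t : ℝ) / n) ≤ y := by
  have hexp : (K : ℝ) * (t / n) ≤ 1 := by
    rw [← mul_div_assoc]
    exact div_le_one_of_le₀ (by exact_mod_cast hKt) n.cast_nonneg
  calc x ^ ((t : ℝ) / n) ≤ (y ^ K) ^ ((t : ℝ) / n) := by gcongr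
    _ = y ^ ((K : ℝ) * (t / n)) := by
        rw [← Real.rpow_natCast, ← Real.rpow_mul (by linarith)]
    _ ≤ y ^ (1 : ℝ) := Real.rpow_le_rpow_of_exponent_le hy hexp
    _ = y := Real.rpow_one y

namespace HomSPSPCircuit

variable {n t : ℕ} (C : HomSPSPCircuit n t)

theorem mul_length_le {g : List (MvPolynomial (Fin n × Fin n) ℚ)} (hg : g ∈ C.L3) :
    t * g.length ≤ n := by
  obtain ⟨hg2, hne, m, hmn, hm⟩ := C.hL3 g hg
  have hdeg : ∀ p ∈ g, ∃ d, t ≤ d ∧ p.IsHomogeneous d := fun p hp =>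
    (C.hL2 p (hg2 p hp)).2.imp fun _ h => ⟨h.1, h.2.2⟩
  exact (mul_length_le_of_isHomogeneous_list_prod hdeg hne hm).trans hmn

theorem length_le_div (ht : 0 < t) {g : List (MvPolynomial (Fin n × Fin n) ℚ)} (hg : g ∈ C.L3) :
    g.length ≤ n / t :=
  (Nat.le_div_iff_mul_le ht).mpr (Nat.mul_comm _ _ ▸ C.mul_length_le hg)

def bottomMonomials : Finset (Fin n × Fin n →₀ ℕ) :=
  C.L1.toFinset.biUnion support

theorem card_bottomMonomials_le : #C.bottomMonomials ≤ C.L1.length := by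
  refine (card_biUnion_le_card_mul _ _ 1 fun f hf => ?_).trans
    (by simpa using C.L1.toFinset_card_le)
  obtain ⟨m, c, rfl, -⟩ := C.hL1 f (List.mem_toFinset.mp hf)
  simpa using card_le_card (support_monomial_subset (a := c) (s := m))

theorem support_subset_bottomMonomials {f : MvPolynomial (Fin n × Fin n) ℚ} (hf : f ∈ C.L2) :
    f.support ⊆ C.bottomMonomials := by
  obtain ⟨⟨g, hg, rfl⟩, -⟩ := C.hL2 f hf
  exact support_list_sum_subset fun p hp =>
    subset_biUnion_of_mem _ (List.mem_toFinset.mpr (hg p hp))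

theorem support_subset_of_mem_L4 {K : ℕ} (hK : ∀ g ∈ C.L3, g.length ≤ K)
    {f : MvPolynomial (Fin n × Fin n) ℚ} (hf : f ∈ C.L4) :
    f.support ⊆ K • insert 0 C.bottomMonomials := by
  -- the exponent `0` pads the products of fewer than `K` level-2 gates
  obtain ⟨gs, hgs, rfl⟩ := C.hL4 f hf
  refine support_list_sum_subset fun p hp => ?_
  obtain ⟨g, hg, rfl⟩ := List.mem_map.mp hp
  have hg3 := hgs g hg
  exact (support_list_prod_subset_nsmul fun q hq =>
    C.support_subset_bottomMonomials ((C.hL3 g hg3).1 q hq)).trans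
      (nsmul_subset_nsmul (subset_insert _ _) (mem_insert_self _ _) (hK g hg3))

theorem card_support_le_of_mem_L4 {K : ℕ} (hK : ∀ g ∈ C.L3, g.length ≤ K)
    {f : MvPolynomial (Fin n × Fin n) ℚ} (hf : f ∈ C.L4) :
    #f.support ≤ (C.size + 1) ^ K := calc
  #f.support ≤ #(insert 0 C.bottomMonomials) ^ K :=
    (card_le_card (C.support_subset_of_mem_L4 hK hf)).trans card_nsmul_le
  _ ≤ (C.size + 1) ^ K := by
    gcongr
    refine (card_insert_le _ _).trans ?_
    have := C.card_bottomMonomials_le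
    unfold size
    omega

end HomSPSPCircuit

theorem hom_spsp_bottom_fanin_lower_bound_general (n t : ℕ) (ht : 0 < t)
    (C : HomSPSPCircuit n t) (hperm : permPoly n ∈ C.L4) :
    (∀ g ∈ C.L3, g.length ≤ n / t) ∧
      (n.factorial : ℝ) ^ ((t : ℝ) / n) - 1 ≤ C.size := by
  have hfanin : ∀ g ∈ C.L3, g.length ≤ n / t := fun g hg => C.length_le_div ht hg
  have hcount : n.factorial ≤ (C.size + 1) ^ (n / t) :=
    (factorial_le_card_support_permPoly n).trans (C.card_support_le_of_mem_L4 hfanin hperm)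
  have hroot := rpow_div_le_of_le_pow (y := C.size + 1) n.factorial.cast_nonneg
    (by linarith [C.size.cast_nonneg (α := ℝ)]) (by exact_mod_cast hcount)
    (Nat.div_mul_le_self n t)
  exact ⟨hfanin, by linarith⟩

/-- If a homogeneous ΣΠΣΠ circuit computes `Perm_n` and every bottom multiplication gate has
fan-in at least `t`, then every level-3 multiplication gate has fan-in at most `n / t`, and
the size of the circuit is at least `(n!)^{t/n} − 1`. -/
theorem hom_spsp_bottom_fanin_lower_bound (n t : ℕ) (ht : 0 < t) (htn : t ≤ n)
    (C : HomSPSPCircuit n t) (hperm : permPoly n ∈ C.L4) :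
    (∀ g ∈ C.L3, g.length ≤ n / t) ∧
      (n.factorial : ℝ) ^ ((t : ℝ) / n) - 1 ≤ C.size :=
  hom_spsp_bottom_fanin_lower_bound_general n t ht C hperm
end
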